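/- Fix an integer s ≥ 1, γ ∈ [0,1], assume δ_{11} > 0, δ_{10} > 0 and δ_{00} > 0, let Y̲^A ∈ ℝ satisfy Y̲^A ≤ Y^A_i for all units i, let x ≥ Y̲^A, and let μ be a Borel probability measure on ℝ with μ((−∞, Y̲^A)) = 0 such that F_A(u | 0,0) = (1 − γ)·F_A(u | 1,1) + γ·μ((−∞, u]) for all u ∈ ℝ. Then E_A[g_{s,x} | 1,1]·(δ_{11} + (1 − γ)·δ_{00}) + E_A[g_{s,x} | 1,0]·δ_{10} ≤ D^s_A(x) ≤ E_A[g_{s,x} | 1,1]·(δ_{11} + (1 − γ)·δ_{00}) + E_A[g_{s,x} | 1,0]·δ_{10} + ((x − Y̲^A)^{s−1}/(s−1)!)·γ·δ_{00}. (Population A part of Proposition D.4: identification bounds under the Kline–Santos mixture decomposition, in which a fraction γ of unit nonresponders is not represented by the distribution of complete responders.) -/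

import Mathlib

open Finset

noncomputable section

/-- Fraction of units in the response class `(a, b)`. -/
def delta {N : ℕ} (ZA ZB : Fin N → Bool) (a b : Bool) : ℝ :=
  ((univ.filter (fun i => ZA i = a ∧ ZB i = b)).card : ℝ) / N

/-- Conditional mean of `g ∘ Y` given the response class `(a, b)`. -/
def condMean {N : ℕ} (Y : Fin N → ℝ) (ZA ZB : Fin N → Bool) (a b : Bool) (g : ℝ → ℝ) : ℝ :=
  (∑ i ∈ univ.filter (fun i => ZA i = a ∧ ZB i = b), g (Y i)) / ((N : ℝ) * delta ZA ZB a b)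

/-- Conditional CDF of `Y` given the response class `(a, b)`. -/
def condCDF' {N : ℕ} (Y : Fin N → ℝ) (ZA ZB : Fin N → Bool) (a b : Bool) (x : ℝ) : ℝ :=
  ((univ.filter (fun i => Y i ≤ x ∧ ZA i = a ∧ ZB i = b)).card : ℝ) / ((N : ℝ) * delta ZA ZB a b)

/-- Population CDF of `Y`. -/
def popCDF {N : ℕ} (Y : Fin N → ℝ) (x : ℝ) : ℝ :=
  ((univ.filter (fun i => Y i ≤ x)).card : ℝ) / N

/-- `s`-th order dominance function of the population `Y`. -/
def domFn {N : ℕ} (Y : Fin N → ℝ) (s : ℕ) (x : ℝ) : ℝ :=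
  (∑ i ∈ univ.filter (fun i => Y i ≤ x), (x - Y i) ^ (s - 1) / ((s - 1).factorial : ℝ)) / N

/-- `g_{s,x}(y) = ((x-y)^{s-1}/(s-1)!) 1[y ≤ x]`. -/
def gfun (s : ℕ) (x : ℝ) : ℝ → ℝ :=
  fun y => ((x - y) ^ (s - 1) / ((s - 1).factorial : ℝ)) * (if y ≤ x then 1 else 0)

open MeasureTheory

/-! The conditional-CDF identity says that the empirical distribution of `Y^A` on the class
`(0,0)` and the mixture `(1-γ)·(distribution on (1,1)) + γ·μ` have the same CDF, hence are the
same finite measure. Integrating `g_{s,x}` gives `E_A[g | 0,0] = (1-γ) E_A[g | 1,1] + γ ∫ g dμ`,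
while `D^s_A(x) = Σ E_A[g | a,b] δ_{ab}` over the three possible classes. As `μ` lives on
`[Y̲^A, ∞)` and `x ≥ Y̲^A`, the remainder `∫ g dμ` lies in `[0, (x - Y̲^A)^{s-1}/(s-1)!]`. -/

open Set
open scoped NNReal

namespace MeasureTheory

theorem Measure.eq_smul_add_smul_of_measureReal_Iic {ν ρ μ : Measure ℝ} [IsFiniteMeasure ν]
    [IsFiniteMeasure ρ] [IsFiniteMeasure μ] {a b : ℝ≥0}
    (h : ∀ u, ν.real (Iic u) = a * ρ.real (Iic u) + b * μ.real (Iic u)) :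
    ν = a • ρ + b • μ :=
  Measure.ext_of_Iic _ _ fun u => by
    rw [← measureReal_eq_measureReal_iff, h, measureReal_add_apply, measureReal_nnreal_smul_apply,
      measureReal_nnreal_smul_apply]

theorem integral_eq_smul_add_smul_of_measureReal_Iic {ν ρ μ : Measure ℝ} [IsFiniteMeasure ν]
    [IsFiniteMeasure ρ] [IsFiniteMeasure μ] {a b : ℝ≥0}
    (h : ∀ u, ν.real (Iic u) = a * ρ.real (Iic u) + b * μ.real (Iic u))
    {f : ℝ → ℝ} (hρ : Integrable f ρ) (hμ : Integrable f μ) :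
    ∫ y, f y ∂ν = a * ∫ y, f y ∂ρ + b * ∫ y, f y ∂μ := by
  rw [Measure.eq_smul_add_smul_of_measureReal_Iic h,
    integral_add_measure hρ.smul_measure_nnreal hμ.smul_measure_nnreal,
    integral_smul_nnreal_measure, integral_smul_nnreal_measure, NNReal.smul_def, NNReal.smul_def,
    smul_eq_mul, smul_eq_mul]

end MeasureTheory

def responseClass {ι : Type*} [Fintype ι] (ZA ZB : ι → Bool) (a b : Bool) : Finset ι :=
  univ.filter fun i => ZA i = a ∧ ZB i = b

theorem sum_eq_sum_responseClass {ι M : Type*} [Fintype ι] [AddCommMonoid M] {ZA ZB : ι → Bool}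
    (hno : ∀ i, ¬(ZA i = false ∧ ZB i = true)) (f : ι → M) :
    ∑ i, f i = ∑ i ∈ responseClass ZA ZB true true, f i
      + ∑ i ∈ responseClass ZA ZB true false, f i + ∑ i ∈ responseClass ZA ZB false false, f i := by
  have hempty : responseClass ZA ZB false true = ∅ :=
    filter_eq_empty_iff.2 fun i _ => hno i
  rw [← sum_fiberwise univ (fun i => (ZA i, ZB i)) f, Fintype.sum_prod_type]
  simp only [Fintype.sum_bool, Prod.mk.injEq]
  simp only [responseClass] at hempty ⊢
  rw [hempty, sum_empty]
  abel

section ResponseClass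

variable {N : ℕ} (Y : Fin N → ℝ) (ZA ZB : Fin N → Bool) (a b : Bool)

theorem delta_nonneg : 0 ≤ delta ZA ZB a b := by
  unfold delta; positivity

theorem condMean_mul_delta (g : ℝ → ℝ) :
    condMean Y ZA ZB a b g * delta ZA ZB a b = (∑ i ∈ responseClass ZA ZB a b, g (Y i)) / N := by
  rcases (delta_nonneg ZA ZB a b).eq_or_lt with hδ | hδ
  · have hclass : responseClass ZA ZB a b = ∅ := by
      rcases Nat.eq_zero_or_pos N with rfl | hN
      · exact Subsingleton.elim _ _
      · have hcard : ((responseClass ZA ZB a b).card : ℝ) = 0 :=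
          (div_eq_zero_iff.1 hδ.symm).resolve_right (by positivity)
        exact card_eq_zero.1 (by exact_mod_cast hcard)
    rw [← hδ, hclass, sum_empty, zero_div, mul_zero]
  · have hN : (N : ℝ) ≠ 0 := by
      rintro hN
      simp [delta, hN] at hδ
    rw [condMean, div_mul_eq_mul_div, mul_div_mul_right _ _ hδ.ne']
    rfl

def condDist : Measure ℝ :=
  (N * delta ZA ZB a b)⁻¹.toNNReal • ∑ i ∈ responseClass ZA ZB a b, Measure.dirac (Y i)

instance : IsFiniteMeasure (condDist Y ZA ZB a b) := by
  unfold condDist; infer_instance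

theorem condDist_real_Iic (u : ℝ) :
    (condDist Y ZA ZB a b).real (Iic u) = condCDF' Y ZA ZB a b u := by
  have hδ := delta_nonneg ZA ZB a b
  rw [condDist, measureReal_nnreal_smul_apply, Real.coe_toNNReal _ (by positivity)]
  simp only [measureReal_def, Measure.finsetSum_apply, Measure.dirac_apply' _ measurableSet_Iic,
    indicator_apply, Set.mem_Iic, Pi.one_apply, sum_boole, ENNReal.toReal_natCast, condCDF',
    responseClass, filter_filter, and_comm, div_eq_inv_mul]

theorem integrable_condDist (g : ℝ → ℝ) : Integrable g (condDist Y ZA ZB a b) :=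
  (integrable_finsetSum_measure.2 fun _ _ => integrable_dirac enorm_lt_top).smul_measure_nnreal

theorem integral_condDist (g : ℝ → ℝ) :
    ∫ y, g y ∂condDist Y ZA ZB a b = condMean Y ZA ZB a b g := by
  have hδ := delta_nonneg ZA ZB a b
  rw [condDist, integral_smul_nnreal_measure,
    integral_finsetSum_measure fun i _ => integrable_dirac enorm_lt_top, NNReal.smul_def,
    Real.coe_toNNReal _ (by positivity), smul_eq_mul, inv_mul_eq_div]
  simp only [integral_dirac, condMean, responseClass]

end ResponseClass

theorem condMean_eq_of_condCDF'_eq_mix {N : ℕ} {Y : Fin N → ℝ} {ZA ZB : Fin N → Bool}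
    {a b a' b' : Bool} {γ : ℝ} (hγ : γ ∈ Icc (0 : ℝ) 1) {μ : Measure ℝ} [IsFiniteMeasure μ]
    (hmix : ∀ u, condCDF' Y ZA ZB a b u =
      (1 - γ) * condCDF' Y ZA ZB a' b' u + γ * (μ (Iic u)).toReal)
    {g : ℝ → ℝ} (hg : Integrable g μ) :
    condMean Y ZA ZB a b g = (1 - γ) * condMean Y ZA ZB a' b' g + γ * ∫ y, g y ∂μ := by
  have h1γ : 0 ≤ 1 - γ := sub_nonneg.2 hγ.2
  have hcdf : ∀ u, (condDist Y ZA ZB a b).real (Iic u) = (1 - γ).toNNReal *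
      (condDist Y ZA ZB a' b').real (Iic u) + γ.toNNReal * μ.real (Iic u) := fun u => by
    rw [Real.coe_toNNReal _ h1γ, Real.coe_toNNReal _ hγ.1, condDist_real_Iic, condDist_real_Iic,
      hmix, measureReal_def]
  rw [← integral_condDist, ← integral_condDist, integral_eq_smul_add_smul_of_measureReal_Iic hcdf
    (integrable_condDist Y ZA ZB a' b' g) hg, Real.coe_toNNReal _ h1γ, Real.coe_toNNReal _ hγ.1]

theorem gfun_nonneg (s : ℕ) (x y : ℝ) : 0 ≤ gfun s x y := by
  unfold gfun
  split_ifs with h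
  · have := sub_nonneg.2 h
    positivity
  · simp

theorem gfun_le {s : ℕ} {l x y : ℝ} (hx : l ≤ x) (hy : l ≤ y) :
    gfun s x y ≤ (x - l) ^ (s - 1) / ((s - 1).factorial : ℝ) := by
  unfold gfun
  split_ifs with h
  · rw [mul_one]
    gcongr
  · have := sub_nonneg.2 hx
    rw [mul_zero]
    positivity

theorem measurable_gfun (s : ℕ) (x : ℝ) : Measurable (gfun s x) :=
  (by fun_prop : Measurable fun y : ℝ => (x - y) ^ (s - 1) / ((s - 1).factorial : ℝ)).mul
    (Measurable.ite measurableSet_Iic measurable_const measurable_const)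

theorem ae_le_of_measure_Iio_eq_zero {μ : Measure ℝ} {l : ℝ} (hμ : μ (Iio l) = 0) :
    ∀ᵐ y ∂μ, l ≤ y := by
  rw [ae_iff]
  simp only [not_le]
  exact hμ

theorem integrable_gfun {μ : Measure ℝ} [IsFiniteMeasure μ] {l : ℝ} (hμ : μ (Iio l) = 0)
    (s : ℕ) {x : ℝ} (hx : l ≤ x) : Integrable (gfun s x) μ :=
  (integrable_const ((x - l) ^ (s - 1) / ((s - 1).factorial : ℝ))).mono'
    (measurable_gfun s x).aestronglyMeasurable <| by
      filter_upwards [ae_le_of_measure_Iio_eq_zero hμ] with y hy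
      rw [Real.norm_of_nonneg (gfun_nonneg s x y)]
      exact gfun_le hx hy

theorem integral_gfun_le {μ : Measure ℝ} [IsProbabilityMeasure μ] {l : ℝ} (hμ : μ (Iio l) = 0)
    (s : ℕ) {x : ℝ} (hx : l ≤ x) :
    ∫ y, gfun s x y ∂μ ≤ (x - l) ^ (s - 1) / ((s - 1).factorial : ℝ) := by
  calc ∫ y, gfun s x y ∂μ ≤ ∫ _, (x - l) ^ (s - 1) / ((s - 1).factorial : ℝ) ∂μ :=
        integral_mono_of_nonneg (.of_forall (gfun_nonneg s x)) (integrable_const _) <| by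
          filter_upwards [ae_le_of_measure_Iio_eq_zero hμ] with y hy using gfun_le hx hy
    _ = (x - l) ^ (s - 1) / ((s - 1).factorial : ℝ) := by simp

theorem domFn_eq_sum_gfun {N : ℕ} (Y : Fin N → ℝ) (s : ℕ) (x : ℝ) :
    domFn Y s x = (∑ i, gfun s x (Y i)) / N := by
  simp only [domFn, gfun, sum_filter, mul_ite, mul_one, mul_zero]

theorem domFn_eq_sum_condMean_mul_delta {N : ℕ} (Y : Fin N → ℝ) {ZA ZB : Fin N → Bool}
    (hno : ∀ i, ¬(ZA i = false ∧ ZB i = true)) (s : ℕ) (x : ℝ) :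
    domFn Y s x = condMean Y ZA ZB true true (gfun s x) * delta ZA ZB true true
      + condMean Y ZA ZB true false (gfun s x) * delta ZA ZB true false
      + condMean Y ZA ZB false false (gfun s x) * delta ZA ZB false false := by
  rw [domFn_eq_sum_gfun, sum_eq_sum_responseClass hno, condMean_mul_delta, condMean_mul_delta,
    condMean_mul_delta, add_div, add_div]

theorem kline_santos_bounds_A_general {N : ℕ}
    (YA : Fin N → ℝ) (ZA ZB : Fin N → Bool)
    (hno : ∀ i, ¬(ZA i = false ∧ ZB i = true))
    (s : ℕ) (γ : ℝ) (hγ : γ ∈ Set.Icc (0 : ℝ) 1)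
    (YlA : ℝ)
    (x : ℝ) (hx : YlA ≤ x)
    (μ : Measure ℝ) [IsProbabilityMeasure μ] (hsupp : μ (Set.Iio YlA) = 0)
    (hmix : ∀ u : ℝ, condCDF' YA ZA ZB false false u =
      (1 - γ) * condCDF' YA ZA ZB true true u + γ * (μ (Set.Iic u)).toReal) :
    condMean YA ZA ZB true true (gfun s x)
        * (delta ZA ZB true true + (1 - γ) * delta ZA ZB false false)
      + condMean YA ZA ZB true false (gfun s x) * delta ZA ZB true false
      ≤ domFn YA s x ∧
    domFn YA s x ≤
      condMean YA ZA ZB true true (gfun s x)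
        * (delta ZA ZB true true + (1 - γ) * delta ZA ZB false false)
      + condMean YA ZA ZB true false (gfun s x) * delta ZA ZB true false
      + ((x - YlA) ^ (s - 1) / ((s - 1).factorial : ℝ)) * γ * delta ZA ZB false false := by
  have hI0 : 0 ≤ ∫ y, gfun s x y ∂μ := integral_nonneg (gfun_nonneg s x)
  have hIC := integral_gfun_le hsupp s hx
  have hγδ : 0 ≤ γ * delta ZA ZB false false := mul_nonneg hγ.1 (delta_nonneg ZA ZB false false)
  rw [domFn_eq_sum_condMean_mul_delta YA hno,
    condMean_eq_of_condCDF'_eq_mix hγ hmix (integrable_gfun hsupp s hx)]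
  constructor
  · nlinarith [mul_nonneg hγδ hI0]
  · nlinarith [mul_le_mul_of_nonneg_left hIC hγδ]

/-- Population A part of Proposition D.4: identification bounds under the
Kline–Santos mixture decomposition, in which a fraction `γ` of unit nonresponders
is not represented by the distribution of complete responders. -/
theorem kline_santos_bounds_A {N : ℕ} (hN : 1 ≤ N)
    (YA YB : Fin N → ℝ) (ZA ZB : Fin N → Bool)
    (hno : ∀ i, ¬(ZA i = false ∧ ZB i = true))
    (s : ℕ) (hs : 1 ≤ s) (γ : ℝ) (hγ : γ ∈ Set.Icc (0 : ℝ) 1)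
    (h11 : 0 < delta ZA ZB true true) (h10 : 0 < delta ZA ZB true false)
    (h00 : 0 < delta ZA ZB false false)
    (YlA : ℝ) (hYA : ∀ i, YlA ≤ YA i)
    (x : ℝ) (hx : YlA ≤ x)
    (μ : Measure ℝ) [IsProbabilityMeasure μ] (hsupp : μ (Set.Iio YlA) = 0)
    (hmix : ∀ u : ℝ, condCDF' YA ZA ZB false false u =
      (1 - γ) * condCDF' YA ZA ZB true true u + γ * (μ (Set.Iic u)).toReal) :
    condMean YA ZA ZB true true (gfun s x)
        * (delta ZA ZB true true + (1 - γ) * delta ZA ZB false false)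
      + condMean YA ZA ZB true false (gfun s x) * delta ZA ZB true false
      ≤ domFn YA s x ∧
    domFn YA s x ≤
      condMean YA ZA ZB true true (gfun s x)
        * (delta ZA ZB true true + (1 - γ) * delta ZA ZB false false)
      + condMean YA ZA ZB true false (gfun s x) * delta ZA ZB true false
      + ((x - YlA) ^ (s - 1) / ((s - 1).factorial : ℝ)) * γ * delta ZA ZB false false :=
  kline_santos_bounds_A_general YA ZA ZB hno s γ hγ YlA x hx μ hsupp hmix
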